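/- Let (g, J, φ) be a non-abelian nilpotent pseudo-Hermitian quadratic Lie algebra with dim g = n > 4. Then (g, J, φ) is equivalent to a pHQ-double extension of an (n−4)-dimensional nilpotent pseudo-Hermitian quadratic Lie algebra. -/

import Mathlib

open TensorProduct

/-- A pseudo-Hermitian quadratic Lie algebra structure on a real vector space `V`:
`br` is a Lie bracket, `J` is an integrable complex structure, and `φ` is a
nondegenerate symmetric invariant bilinear form compatible with `J`. -/
structure IsPHQ (V : Type*) [AddCommGroup V] [Module ℝ V]
    (br : V → V → V) (J : V → V) (φ : V → V → ℝ) : Prop where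
  br_add_left : ∀ x y z : V, br (x + y) z = br x z + br y z
  br_smul_left : ∀ (c : ℝ) (x z : V), br (c • x) z = c • br x z
  br_skew : ∀ x y : V, br x y = - br y x
  jacobi : ∀ x y z : V, br x (br y z) + br y (br z x) + br z (br x y) = 0
  J_add : ∀ x y : V, J (x + y) = J x + J y
  J_smul : ∀ (c : ℝ) (x : V), J (c • x) = c • J x
  J_sq : ∀ x : V, J (J x) = - x
  integrable : ∀ x y : V, br x y + J (br (J x) y) + J (br x (J y)) - br (J x) (J y) = 0
  phi_add_left : ∀ x y z : V, φ (x + y) z = φ x z + φ y z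
  phi_smul_left : ∀ (c : ℝ) (x y : V), φ (c • x) y = c * φ x y
  phi_symm : ∀ x y : V, φ x y = φ y x
  phi_nondeg : ∀ x : V, (∀ y : V, φ x y = 0) → x = 0
  phi_invariant : ∀ x y z : V, φ (br x y) z + φ y (br x z) = 0
  phi_hermitian : ∀ x y : V, φ (J x) (J y) = φ x y

/-- Equivalence of pseudo-Hermitian quadratic Lie algebras: a linear isomorphism
intertwining the brackets and the complex structures and preserving the metrics. -/
def PHQEquiv {V W : Type*} [AddCommGroup V] [Module ℝ V] [AddCommGroup W] [Module ℝ W]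
    (brV : V → V → V) (JV : V → V) (φV : V → V → ℝ)
    (brW : W → W → W) (JW : W → W) (φW : W → W → ℝ) : Prop :=
  ∃ ψ : V ≃ₗ[ℝ] W, (∀ x y, ψ (brV x y) = brW (ψ x) (ψ y)) ∧
    (∀ x, ψ (JV x) = JW (ψ x)) ∧ ∀ x y, φW (ψ x) (ψ y) = φV x y

/-- Lower central series of a subalgebra `W` with respect to a bracket `br`. -/
def lcsW {V : Type*} [AddCommGroup V] [Module ℝ V] (br : V → V → V)
    (W : Submodule ℝ V) : ℕ → Submodule ℝ V
  | 0 => W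
  | n + 1 => Submodule.span ℝ {w : V | ∃ x ∈ lcsW br W n, ∃ y ∈ W, w = br x y}

/-- `φ` has signature `(a, b)`: there is an orthogonal decomposition into a
negative definite subspace of dimension `a` and a positive definite subspace of
dimension `b` (the convention of the paper, where positive definite is `(0, 2n)`). -/
def hasSignature {V : Type*} [AddCommGroup V] [Module ℝ V]
    (φ : V → V → ℝ) (a b : ℕ) : Prop :=
  ∃ N P : Submodule ℝ V, N ⊓ P = ⊥ ∧ N ⊔ P = ⊤ ∧
    (∀ x ∈ N, ∀ y ∈ P, φ x y = 0) ∧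
    (∀ x ∈ N, x ≠ 0 → φ x x < 0) ∧ (∀ x ∈ P, x ≠ 0 → 0 < φ x x) ∧
    Module.finrank ℝ N = a ∧ Module.finrank ℝ P = b

/-- The bracket of the pHQ-double extension `g = ℝz ⊕ ℝz' ⊕ g₀ ⊕ ℝv' ⊕ ℝv`,
with an element `(a, b, x, c, d)` standing for `a·z + b·z' + x + c·v' + d·v`. -/
def extBr {V : Type*} [AddCommGroup V] [Module ℝ V]
    (br₀ : V → V → V) (φ₀ : V → V → ℝ) (D F : V → V) (s₀ : V) :
    (ℝ × ℝ × V × ℝ × ℝ) → (ℝ × ℝ × V × ℝ × ℝ) → (ℝ × ℝ × V × ℝ × ℝ) :=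
  fun P Q =>
    (φ₀ (F P.2.2.1) Q.2.2.1 + P.2.2.2.1 * φ₀ s₀ Q.2.2.1 - Q.2.2.2.1 * φ₀ s₀ P.2.2.1,
     φ₀ (D P.2.2.1) Q.2.2.1 - P.2.2.2.2 * φ₀ s₀ Q.2.2.1 + Q.2.2.2.2 * φ₀ s₀ P.2.2.1,
     br₀ P.2.2.1 Q.2.2.1 + P.2.2.2.2 • F Q.2.2.1 - Q.2.2.2.2 • F P.2.2.1
       + P.2.2.2.1 • D Q.2.2.1 - Q.2.2.2.1 • D P.2.2.1
       + (P.2.2.2.2 * Q.2.2.2.1 - P.2.2.2.1 * Q.2.2.2.2) • s₀,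
     0, 0)

/-- The complex structure of the pHQ-double extension:
`Jz = z'`, `Jz' = -z`, `Jv = v'`, `Jv' = -v`, `Jx = J₀x`. -/
def extJ {V : Type*} [AddCommGroup V] [Module ℝ V] (J₀ : V → V) :
    (ℝ × ℝ × V × ℝ × ℝ) → (ℝ × ℝ × V × ℝ × ℝ) :=
  fun P => (-P.2.1, P.1, J₀ P.2.2.1, P.2.2.2.2, -P.2.2.2.1)

/-- The metric of the pHQ-double extension: `φ(z,v) = φ(z',v') = 1` and `φ₀` on `g₀`. -/
def extPhi {V : Type*} [AddCommGroup V] [Module ℝ V] (φ₀ : V → V → ℝ) :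
    (ℝ × ℝ × V × ℝ × ℝ) → (ℝ × ℝ × V × ℝ × ℝ) → ℝ :=
  fun P Q => P.1 * Q.2.2.2.2 + P.2.2.2.2 * Q.1 + P.2.1 * Q.2.2.2.1 + P.2.2.2.1 * Q.2.1
    + φ₀ P.2.2.1 Q.2.2.1

/-- The data `(D, F, s₀)` needed for a pHQ-double extension of `(g₀, br₀, J₀, φ₀)`:
`D`, `F` are `φ₀`-skewsymmetric derivations with `[F + J₀D, J₀] = 0` and
`[F, D] = ad_{g₀}(s₀)`. -/
def IsPHQDblExtData (V : Type*) [AddCommGroup V] [Module ℝ V]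
    (br₀ : V → V → V) (J₀ : V → V) (φ₀ : V → V → ℝ) (D F : V → V) (s₀ : V) : Prop :=
  (∀ x y, D (x + y) = D x + D y) ∧ (∀ (c : ℝ) (x : V), D (c • x) = c • D x) ∧
  (∀ x y, F (x + y) = F x + F y) ∧ (∀ (c : ℝ) (x : V), F (c • x) = c • F x) ∧
  (∀ x y, φ₀ (D x) y = - φ₀ x (D y)) ∧ (∀ x y, φ₀ (F x) y = - φ₀ x (F y)) ∧
  (∀ x y, D (br₀ x y) = br₀ (D x) y + br₀ x (D y)) ∧
  (∀ x y, F (br₀ x y) = br₀ (F x) y + br₀ x (F y)) ∧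
  (∀ x, F (J₀ x) + J₀ (D (J₀ x)) = J₀ (F x) + J₀ (J₀ (D x))) ∧
  (∀ x, F (D x) - D (F x) = br₀ s₀ x)

/-! ### Concrete models -/

/-- Standard complex structure on `ℝ²`. -/
def j2 : (Fin 2 → ℝ) → (Fin 2 → ℝ) := fun x => ![-x 1, x 0]

/-- Positive definite Hermitian metric on `ℝ²` (the algebra `ℝ^{2,0}`). -/
def phi2 : (Fin 2 → ℝ) → (Fin 2 → ℝ) → ℝ := fun x y => x 0 * y 0 + x 1 * y 1

/-- Complex structure of the 6-dimensional Lie algebra `ℒ`, on the ordered basis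
`x₁, Jx₁, x₂, Jx₂, x₃, Jx₃`. -/
def j6 : (Fin 6 → ℝ) → (Fin 6 → ℝ) := fun x => ![-x 1, x 0, -x 3, x 2, -x 5, x 4]

/-- Bracket of `ℒ`: `[x₁, Jx₁] = x₂`, `[x₁, x₂] = -Jx₃`, `[Jx₁, x₂] = x₃` on the
ordered basis `x₁, Jx₁, x₂, Jx₂, x₃, Jx₃`. -/
def brL : (Fin 6 → ℝ) → (Fin 6 → ℝ) → (Fin 6 → ℝ) := fun x y =>
  ![0, 0, x 0 * y 1 - x 1 * y 0, 0, x 1 * y 2 - x 2 * y 1, -(x 0 * y 2 - x 2 * y 0)]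

/-- The metric of `ℒ^{4,2}`: `φ(x₁,x₃) = φ(Jx₁,Jx₃) = 1`, `φ(x₂,x₂) = φ(Jx₂,Jx₂) = 1`. -/
def phiL : (Fin 6 → ℝ) → (Fin 6 → ℝ) → ℝ := fun x y =>
  x 0 * y 4 + x 4 * y 0 + x 1 * y 5 + x 5 * y 1 + x 2 * y 2 + x 3 * y 3

/-- Complex structure on `ℝ⁸`, ordered basis `x₁, x₂, x₃, x₄, x₁*, x₂*, x₃*, x₄*` with
`Jx₁ = x₂`, `Jx₃ = x₄`, `Jx₁* = x₂*`, `Jx₃* = x₄*`. -/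
def j8 : (Fin 8 → ℝ) → (Fin 8 → ℝ) := fun x =>
  ![-x 1, x 0, -x 3, x 2, -x 5, x 4, -x 7, x 6]

/-- The metric `φ(xᵢ, xⱼ*) = δᵢⱼ` of the `T*`-extensions of the Kodaira–Thurston algebra. -/
def phi8 : (Fin 8 → ℝ) → (Fin 8 → ℝ) → ℝ := fun x y =>
  x 0 * y 4 + x 4 * y 0 + x 1 * y 5 + x 5 * y 1 + x 2 * y 6 + x 6 * y 2
    + x 3 * y 7 + x 7 * y 3

/-- A neutral pseudo-Hermitian metric on abelian `ℝ⁸` (the algebra `ℝ^{4,4}`). -/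
def phi44 : (Fin 8 → ℝ) → (Fin 8 → ℝ) → ℝ := fun x y =>
  x 0 * y 0 + x 1 * y 1 + x 2 * y 2 + x 3 * y 3
    - x 4 * y 4 - x 5 * y 5 - x 6 * y 6 - x 7 * y 7

/-- Bracket of `T*₀k`: `[x₁,x₂] = x₃`, `[x₃*,x₁] = x₂*`, `[x₃*,x₂] = -x₁*`. -/
def brT0 : (Fin 8 → ℝ) → (Fin 8 → ℝ) → (Fin 8 → ℝ) := fun x y =>
  ![0, 0, x 0 * y 1 - x 1 * y 0, 0,
    -(x 6 * y 1 - x 1 * y 6), x 6 * y 0 - x 0 * y 6, 0, 0]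

/-- Bracket of `T*_{θ₃}k`: `[x₁,x₂] = x₃`, `[x₁,x₃] = x₄*`, `[x₁,x₄] = -x₃*`,
`[x₃,x₄] = x₁*`, `[x₃*,x₁] = x₂*`, `[x₃*,x₂] = -x₁*`. -/
def brT3 : (Fin 8 → ℝ) → (Fin 8 → ℝ) → (Fin 8 → ℝ) := fun x y =>
  ![0, 0, x 0 * y 1 - x 1 * y 0, 0,
    (x 2 * y 3 - x 3 * y 2) - (x 6 * y 1 - x 1 * y 6),
    x 6 * y 0 - x 0 * y 6,
    -(x 0 * y 3 - x 3 * y 0),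
    x 0 * y 2 - x 2 * y 0]

/-- Bracket of `T*_{αθ₁}k`: `[x₁,x₂] = x₃ + αx₃*`, `[x₁,x₃] = -αx₂*`, `[x₂,x₃] = αx₁*`,
`[x₃*,x₁] = x₂*`, `[x₃*,x₂] = -x₁*`. -/
def brTal (α : ℝ) : (Fin 8 → ℝ) → (Fin 8 → ℝ) → (Fin 8 → ℝ) := fun x y =>
  ![0, 0, x 0 * y 1 - x 1 * y 0, 0,
    α * (x 1 * y 2 - x 2 * y 1) - (x 6 * y 1 - x 1 * y 6),
    -(α * (x 0 * y 2 - x 2 * y 0)) + (x 6 * y 0 - x 0 * y 6),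
    α * (x 0 * y 1 - x 1 * y 0), 0]

/-- Bracket of the Kodaira–Thurston algebra `k`: `[x₁, x₂] = x₃`. -/
def brK : (Fin 4 → ℝ) → (Fin 4 → ℝ) → (Fin 4 → ℝ) := fun x y =>
  ![0, 0, x 0 * y 1 - x 1 * y 0, 0]

/-- The abelian complex structure of the Kodaira–Thurston algebra:
`Jx₁ = x₂`, `Jx₂ = -x₁`, `Jx₃ = x₄`, `Jx₄ = -x₃`. -/
def jK : (Fin 4 → ℝ) → (Fin 4 → ℝ) := fun x => ![-x 1, x 0, -x 3, x 2]

/-- The dual basis vectors `xᵢ*` of `k*`. -/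
noncomputable def p4 (i : Fin 4) : Module.Dual ℝ (Fin 4 → ℝ) := LinearMap.proj i

/-- The cyclic cocycle `θ₁`. -/
noncomputable def th1 : (Fin 4 → ℝ) → (Fin 4 → ℝ) → Module.Dual ℝ (Fin 4 → ℝ) := fun x y =>
  (x 0 * y 1 - x 1 * y 0) • p4 2 - (x 0 * y 2 - x 2 * y 0) • p4 1
    + (x 1 * y 2 - x 2 * y 1) • p4 0

/-- The cyclic cocycle `θ₂`. -/
noncomputable def th2 : (Fin 4 → ℝ) → (Fin 4 → ℝ) → Module.Dual ℝ (Fin 4 → ℝ) := fun x y =>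
  (x 0 * y 1 - x 1 * y 0) • p4 3 - (x 0 * y 3 - x 3 * y 0) • p4 1
    + (x 1 * y 3 - x 3 * y 1) • p4 0

/-- The cyclic cocycle `θ₃`. -/
noncomputable def th3 : (Fin 4 → ℝ) → (Fin 4 → ℝ) → Module.Dual ℝ (Fin 4 → ℝ) := fun x y =>
  (x 0 * y 2 - x 2 * y 0) • p4 3 - (x 0 * y 3 - x 3 * y 0) • p4 2
    + (x 2 * y 3 - x 3 * y 2) • p4 0

/-- The cyclic cocycle `θ₄`. -/
noncomputable def th4 : (Fin 4 → ℝ) → (Fin 4 → ℝ) → Module.Dual ℝ (Fin 4 → ℝ) := fun x y =>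
  (x 1 * y 2 - x 2 * y 1) • p4 3 - (x 1 * y 3 - x 3 * y 1) • p4 2
    + (x 2 * y 3 - x 3 * y 2) • p4 1

/-!
Invariance of `φ` makes the centre `Z` the orthogonal of `[g, g]`. If no nonzero isotropic `z`
had `z, J z ∈ Z`, the orthogonal of `Z + J Z + [g, g] + J [g, g]` would vanish. Since
integrability gives `[J a, J b] = [a, b] + J [J a, b] + J [a, J b]`, the equality
`g = Z + J Z + Cᵏ + J Cᵏ` then propagates down the lower central series, so nilpotency forces
`g = Z + J Z`, which is abelian.

For such a `z` choose `v` with `φ (z, v) = 1` and `φ (J z, v) = φ (v, v) = 0`. The subspace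
`g₀ = {z, J z, v, J v}ᗮ` is `J`-invariant and nondegenerate, projecting brackets onto it makes it
a nilpotent pHQ algebra, and `g = ℝz ⊕ ℝJz ⊕ g₀ ⊕ ℝJv ⊕ ℝv` is its double extension.
-/

section LowerCentralSeries

variable {V : Type*} [AddCommGroup V] [Module ℝ V] {br : V → V → V}

theorem lcsW_succ (W : Submodule ℝ V) (k : ℕ) :
    lcsW br W (k + 1) = Submodule.span ℝ {w | ∃ x ∈ lcsW br W k, ∃ y ∈ W, w = br x y} := rfl

theorem br_mem_lcsW_succ {W : Submodule ℝ V} {k : ℕ} {x y : V} (hx : x ∈ lcsW br W k)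
    (hy : y ∈ W) : br x y ∈ lcsW br W (k + 1) :=
  Submodule.subset_span ⟨x, hx, y, hy, rfl⟩

end LowerCentralSeries

theorem phqEquiv_of_linearEquiv {V W : Type*} [AddCommGroup V] [Module ℝ V] [AddCommGroup W]
    [Module ℝ W] {brV : V → V → V} {JV : V → V} {φV : V → V → ℝ} {brW : W → W → W}
    {JW : W → W} {φW : W → W → ℝ} (Θ : W ≃ₗ[ℝ] V)
    (hbr : ∀ P Q, Θ (brW P Q) = brV (Θ P) (Θ Q)) (hJ : ∀ P, Θ (JW P) = JV (Θ P))
    (hφ : ∀ P Q, φV (Θ P) (Θ Q) = φW P Q) : PHQEquiv brV JV φV brW JW φW :=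
  ⟨Θ.symm, fun x y => Θ.injective (by simp [hbr]), fun x => Θ.injective (by simp [hJ]),
    fun x y => by rw [← hφ]; simp⟩

namespace IsPHQ

variable {V : Type*} [AddCommGroup V] [Module ℝ V] {br : V → V → V} {J : V → V}
  {φ : V → V → ℝ} (h : IsPHQ V br J φ)
include h

theorem br_zero_left (y : V) : br 0 y = 0 := by
  simpa using h.br_smul_left 0 0 y

theorem br_add_right (x y z : V) : br x (y + z) = br x y + br x z := by
  rw [h.br_skew, h.br_add_left, neg_add, ← h.br_skew, ← h.br_skew]

theorem br_smul_right (c : ℝ) (x y : V) : br x (c • y) = c • br x y := by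
  rw [h.br_skew, h.br_smul_left, ← smul_neg, ← h.br_skew]

theorem br_neg_left (x y : V) : br (-x) y = -br x y := by
  simpa using h.br_smul_left (-1) x y

theorem br_neg_right (x y : V) : br x (-y) = -br x y := by
  simpa using h.br_smul_right (-1) x y

theorem br_sub_left (x y z : V) : br (x - y) z = br x z - br y z := by
  rw [sub_eq_add_neg, h.br_add_left, h.br_neg_left, ← sub_eq_add_neg]

theorem br_self (x : V) : br x x = 0 := by
  have h2 : (2 : ℝ) • br x x = 0 := by
    rw [two_smul]
    nth_rewrite 2 [h.br_skew]
    exact add_neg_cancel _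
  simpa using h2

theorem br_br (x y w : V) : br x (br y w) = br (br x y) w + br y (br x w) := by
  have hj := h.jacobi x y w
  rw [h.br_skew w x, h.br_neg_right, h.br_skew w (br x y)] at hj
  rw [← sub_eq_zero, ← hj]
  abel

theorem br_J_J (x y : V) : br (J x) (J y) = br x y + J (br (J x) y) + J (br x (J y)) :=
  (sub_eq_zero.1 (h.integrable x y)).symm

theorem J_zero : J 0 = 0 := by
  simpa using h.J_smul 0 0

theorem J_neg (x : V) : J (-x) = -J x := by
  simpa using h.J_smul (-1) x

theorem J_sub (x y : V) : J (x - y) = J x - J y := by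
  rw [sub_eq_add_neg, h.J_add, h.J_neg, ← sub_eq_add_neg]

theorem integrable_J (x y : V) :
    br x (J y) + J (br (J x) (J y)) = J (br x y) - br (J x) y := by
  have hJ := congrArg J (h.integrable x y)
  rw [h.J_sub, h.J_add, h.J_add, h.J_sq, h.J_sq, h.J_zero] at hJ
  rw [← sub_eq_zero, ← neg_eq_zero, ← hJ]
  abel

theorem phi_add_right (x y z : V) : φ x (y + z) = φ x y + φ x z := by
  rw [h.phi_symm, h.phi_add_left, h.phi_symm y, h.phi_symm z]

theorem phi_smul_right (c : ℝ) (x y : V) : φ x (c • y) = c * φ x y := by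
  rw [h.phi_symm, h.phi_smul_left, h.phi_symm]

theorem phi_neg_left (x y : V) : φ (-x) y = -φ x y := by
  simpa using h.phi_smul_left (-1) x y

theorem phi_neg_right (x y : V) : φ x (-y) = -φ x y := by
  simpa using h.phi_smul_right (-1) x y

theorem phi_sub_left (x y z : V) : φ (x - y) z = φ x z - φ y z := by
  rw [sub_eq_add_neg, h.phi_add_left, h.phi_neg_left, ← sub_eq_add_neg]

theorem phi_sub_right (x y z : V) : φ x (y - z) = φ x y - φ x z := by
  rw [sub_eq_add_neg, h.phi_add_right, h.phi_neg_right, ← sub_eq_add_neg]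

theorem phi_zero_left (y : V) : φ 0 y = 0 := by
  simpa using h.phi_smul_left 0 0 y

theorem phi_zero_right (x : V) : φ x 0 = 0 := by
  rw [h.phi_symm, h.phi_zero_left]

theorem phi_J_left (x y : V) : φ (J x) y = -φ x (J y) := by
  rw [← h.phi_hermitian x (J y), h.J_sq, h.phi_neg_right, neg_neg]

theorem phi_self_J (x : V) : φ x (J x) = 0 := by
  have := h.phi_J_left x x
  rw [h.phi_symm] at this
  linarith

theorem phi_br_left (x y w : V) : φ (br x y) w = -φ y (br x w) :=
  eq_neg_of_add_eq_zero_left (h.phi_invariant x y w)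

theorem eq_zero_of_phi_left (x : V) (hx : ∀ y, φ y x = 0) : x = 0 :=
  h.phi_nondeg x fun y => by rw [h.phi_symm]; exact hx y

def JL : V →ₗ[ℝ] V where
  toFun := J
  map_add' := h.J_add
  map_smul' := h.J_smul

def form : LinearMap.BilinForm ℝ V :=
  LinearMap.mk₂ ℝ φ h.phi_add_left h.phi_smul_left h.phi_add_right h.phi_smul_right

theorem form_nondegenerate : h.form.Nondegenerate :=
  ⟨h.phi_nondeg, h.eq_zero_of_phi_left⟩

theorem eq_top_of_orthogonal_eq_bot [FiniteDimensional ℝ V] {M : Submodule ℝ V}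
    (hM : h.form.orthogonal M = ⊥) : M = ⊤ := by
  have hrank := LinearMap.BilinForm.finrank_orthogonal h.form_nondegenerate M
  rw [hM, finrank_bot] at hrank
  exact Submodule.eq_top_of_finrank_eq (le_antisymm (Submodule.finrank_le M) (by omega))

def center : Submodule ℝ V where
  carrier := {x | ∀ y, br x y = 0}
  add_mem' hx hy w := by rw [h.br_add_left, hx w, hy w, add_zero]
  zero_mem' := h.br_zero_left
  smul_mem' c x hx w := by rw [h.br_smul_left, hx w, smul_zero]

def jHull (M : Submodule ℝ V) : Submodule ℝ V := M ⊔ M.map h.JL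

theorem le_jHull (M : Submodule ℝ V) : M ≤ h.jHull M := le_sup_left

theorem J_mem_jHull_of_mem {M : Submodule ℝ V} {x : V} (hx : x ∈ M) : J x ∈ h.jHull M :=
  Submodule.mem_sup_right ⟨x, hx, rfl⟩

theorem J_mem_jHull {M : Submodule ℝ V} {x : V} (hx : x ∈ h.jHull M) : J x ∈ h.jHull M := by
  obtain ⟨a, ha, _, ⟨b, hb, rfl⟩, rfl⟩ := Submodule.mem_sup.1 hx
  change J (a + J b) ∈ _
  rw [h.J_add, h.J_sq]
  exact add_mem (h.J_mem_jHull_of_mem ha) (Submodule.mem_sup_left (neg_mem hb))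

theorem jHull_le {M N : Submodule ℝ V} (hMN : M ≤ N) (hN : ∀ x ∈ N, J x ∈ N) :
    h.jHull M ≤ N :=
  sup_le hMN (by rintro _ ⟨x, hx, rfl⟩; exact hN x (hMN hx))

theorem jHull_mono {M N : Submodule ℝ V} (hMN : M ≤ N) : h.jHull M ≤ h.jHull N :=
  h.jHull_le (hMN.trans (h.le_jHull N)) fun _ => h.J_mem_jHull

theorem jHull_bot : h.jHull ⊥ = ⊥ := by
  simp [jHull]

/-- Integrability rewrites `[J a, J b]` as `[a, b] + J [J a, b] + J [a, J b]`. -/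
theorem br_mem_jHull {A B : Submodule ℝ V} (hAB : ∀ a ∈ A, ∀ x, br x a ∈ B) {a b : V}
    (ha : a ∈ h.jHull A) (hb : b ∈ h.jHull A) : br a b ∈ h.jHull B := by
  have hAB' : ∀ a ∈ A, ∀ x, br a x ∈ B := fun a ha x => by
    rw [h.br_skew]; exact neg_mem (hAB a ha x)
  obtain ⟨a₁, ha₁, _, ⟨a₂, ha₂, rfl⟩, rfl⟩ := Submodule.mem_sup.1 ha
  obtain ⟨b₁, hb₁, _, ⟨b₂, hb₂, rfl⟩, rfl⟩ := Submodule.mem_sup.1 hb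
  change br (a₁ + J a₂) (b₁ + J b₂) ∈ _
  rw [h.br_add_left, h.br_add_right, h.br_add_right, h.br_J_J]
  have hB := h.le_jHull B
  refine add_mem (add_mem (hB (hAB' a₁ ha₁ _)) (hB (hAB' a₁ ha₁ _)))
    (add_mem (hB (hAB b₁ hb₁ _)) (add_mem (add_mem (hB (hAB' a₂ ha₂ _)) ?_) ?_))
  · exact h.J_mem_jHull_of_mem (hAB b₂ hb₂ _)
  · exact h.J_mem_jHull_of_mem (hAB' a₂ ha₂ _)

theorem br_mem_lcsW_of_mem_center_sup {k : ℕ} {a : V}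
    (ha : a ∈ h.center ⊔ lcsW br ⊤ k) (x : V) : br x a ∈ lcsW br ⊤ (k + 1) := by
  obtain ⟨c, hc, d, hd, rfl⟩ := Submodule.mem_sup.1 ha
  rw [h.br_add_right, h.br_skew x c, hc x, neg_zero, zero_add, h.br_skew]
  exact neg_mem (br_mem_lcsW_succ hd Submodule.mem_top)

theorem mem_center_of_orthogonal {x : V} (hx : ∀ c ∈ lcsW br ⊤ 1, φ c x = 0) :
    x ∈ h.center := by
  have hbr : ∀ y, br y x = 0 := fun y => h.eq_zero_of_phi_left _ fun t => by
    rw [h.phi_symm, h.phi_br_left, h.phi_symm,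
      hx _ (br_mem_lcsW_succ (Submodule.mem_top : y ∈ ⊤) Submodule.mem_top), neg_zero]
  intro y
  rw [h.br_skew, hbr, neg_zero]

theorem jHull_center_sup_lcsW_one_eq_top [FiniteDimensional ℝ V]
    (hno : ∀ z ∈ h.center, J z ∈ h.center → φ z z = 0 → z = 0) :
    h.jHull (h.center ⊔ lcsW br ⊤ 1) = ⊤ := by
  apply h.eq_top_of_orthogonal_eq_bot
  rw [Submodule.eq_bot_iff]
  intro x hx
  have hxc : x ∈ h.center := h.mem_center_of_orthogonal fun c hc =>
    hx c (h.le_jHull _ (Submodule.mem_sup_right hc))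
  have hJxc : J x ∈ h.center := h.mem_center_of_orthogonal fun c hc => by
    have hJc := hx _ (h.J_mem_jHull_of_mem (Submodule.mem_sup_right hc))
    change φ (J c) x = 0 at hJc
    linarith [h.phi_J_left c x]
  exact hno x hxc hJxc (hx x (h.le_jHull _ (Submodule.mem_sup_left hxc)))

theorem jHull_center_sup_lcsW_eq_top [FiniteDimensional ℝ V]
    (hno : ∀ z ∈ h.center, J z ∈ h.center → φ z z = 0 → z = 0) (k : ℕ) :
    h.jHull (h.center ⊔ lcsW br ⊤ k) = ⊤ := by
  induction k with
  | zero => exact top_unique (le_sup_right.trans (h.le_jHull _))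
  | succ k ih =>
    have hC₁ : lcsW br ⊤ 1 ≤ h.jHull (lcsW br ⊤ (k + 1)) := by
      rw [lcsW_succ, Submodule.span_le]
      rintro _ ⟨x, -, y, -, rfl⟩
      exact h.br_mem_jHull (fun a ha t => h.br_mem_lcsW_of_mem_center_sup ha t)
        (by rw [ih]; trivial) (by rw [ih]; trivial)
    set N := h.center ⊔ lcsW br ⊤ (k + 1)
    have hN : h.center ⊔ lcsW br ⊤ 1 ≤ h.jHull N :=
      sup_le ((le_sup_left : h.center ≤ N).trans (h.le_jHull N))
        (hC₁.trans (h.jHull_mono (le_sup_right : lcsW br ⊤ (k + 1) ≤ N)))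
    rw [eq_top_iff, ← h.jHull_center_sup_lcsW_one_eq_top hno]
    exact h.jHull_le hN fun _ => h.J_mem_jHull

theorem exists_isotropic_mem_center [FiniteDimensional ℝ V] (hnilp : ∃ k, lcsW br ⊤ k = ⊥)
    (hna : ∃ x y : V, br x y ≠ 0) :
    ∃ z ≠ 0, z ∈ h.center ∧ J z ∈ h.center ∧ φ z z = 0 := by
  by_contra hex
  have hno : ∀ z ∈ h.center, J z ∈ h.center → φ z z = 0 → z = 0 :=
    fun z hz hJz hzz => by_contra fun hz0 => hex ⟨z, hz0, hz, hJz, hzz⟩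
  obtain ⟨k, hk⟩ := hnilp
  obtain ⟨x, y, hxy⟩ := hna
  have htop := h.jHull_center_sup_lcsW_eq_top hno k
  rw [hk, sup_bot_eq] at htop
  have hxy' : br x y ∈ h.jHull ⊥ :=
    h.br_mem_jHull (A := h.center) (fun a ha t => by rw [h.br_skew, ha t, neg_zero]; rfl)
      (by rw [htop]; trivial) (by rw [htop]; trivial)
  rw [h.jHull_bot, Submodule.mem_bot] at hxy'
  exact hxy hxy'

/-- Normalise `p • u - q • J u`, where `p = φ z u ≠ 0` and `q = φ (J z) u`. -/
theorem exists_phi_eq_one_phi_J_eq_zero {z : V} (hz : z ≠ 0) :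
    ∃ w, φ z w = 1 ∧ φ (J z) w = 0 := by
  obtain ⟨u, hu⟩ : ∃ u, φ z u ≠ 0 := by
    by_contra! hzu
    exact hz (h.phi_nondeg z hzu)
  set p := φ z u
  set q := φ (J z) u
  have hzJu : φ z (J u) = -q := by linarith [h.phi_J_left z u]
  have hJzJu : φ (J z) (J u) = p := h.phi_hermitian z u
  have hr : p ^ 2 + q ^ 2 ≠ 0 := by positivity
  refine ⟨(p / (p ^ 2 + q ^ 2)) • u - (q / (p ^ 2 + q ^ 2)) • J u, ?_, ?_⟩
  · rw [h.phi_sub_right, h.phi_smul_right, h.phi_smul_right, hzJu]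
    field_simp
    ring
  · rw [h.phi_sub_right, h.phi_smul_right, h.phi_smul_right, hJzJu]
    ring

theorem exists_isotropic_partner {z : V} (hz : z ≠ 0) (hzz : φ z z = 0) :
    ∃ v, φ z v = 1 ∧ φ (J z) v = 0 ∧ φ v v = 0 := by
  obtain ⟨w, hzw, hJzw⟩ := h.exists_phi_eq_one_phi_J_eq_zero hz
  have hJzz : φ (J z) z = 0 := by rw [h.phi_symm]; exact h.phi_self_J z
  refine ⟨w - (φ w w / 2) • z, ?_, ?_, ?_⟩
  · rw [h.phi_sub_right, h.phi_smul_right, hzw, hzz]; ring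
  · rw [h.phi_sub_right, h.phi_smul_right, hJzw, hJzz]; ring
  · simp only [h.phi_sub_left, h.phi_sub_right, h.phi_smul_left, h.phi_smul_right, hzz,
      hzw, h.phi_symm w z]
    ring

end IsPHQ

section Frame

variable {V : Type*} [AddCommGroup V] [Module ℝ V]

/-- `z, J z` central and isotropic, paired with `v, J v` as in the double extension:
`φ (z, v) = φ (J z, J v) = 1`, all other pairings among `z, J z, v, J v` vanish. -/
structure IsExtensionFrame (br : V → V → V) (J : V → V) (φ : V → V → ℝ) (z v : V) :
    Prop where
  central : ∀ x, br z x = 0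
  J_central : ∀ x, br (J z) x = 0
  phi_z_z : φ z z = 0
  phi_z_v : φ z v = 1
  phi_Jz_v : φ (J z) v = 0
  phi_v_v : φ v v = 0

/-- The `φ`-orthogonal projection onto `{z, J z, v, J v}ᗮ`. -/
def frameProj (J : V → V) (φ : V → V → ℝ) (z v w : V) : V :=
  w - φ w v • z - φ w (J v) • J z - φ w z • v - φ w (J z) • J v

theorem frameProj_eq_self {J : V → V} {φ : V → V → ℝ} {z v w : V} (hz : φ w z = 0)
    (hJz : φ w (J z) = 0) (hv : φ w v = 0) (hJv : φ w (J v) = 0) :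
    frameProj J φ z v w = w := by
  simp [frameProj, hz, hJz, hv, hJv]

theorem IsPHQ.frameProj_J {br : V → V → V} {J : V → V} {φ : V → V → ℝ}
    (h : IsPHQ V br J φ) (z v w : V) : frameProj J φ z v (J w) = J (frameProj J φ z v w) := by
  simp only [frameProj, h.J_sub, h.J_smul, h.J_sq, h.phi_J_left, h.phi_neg_right, neg_neg]
  module


variable {W : Type*} [AddCommGroup W] [Module ℝ W]

/-- `ι` and `p` identify `W` with the image of `frameProj`, the model of `g₀`. -/
structure IsFrameSplitting (J : V → V) (φ : V → V → ℝ) (z v : V) (ι : W →ₗ[ℝ] V)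
    (p : V →ₗ[ℝ] W) : Prop where
  p_ι : ∀ ξ, p (ι ξ) = ξ
  ι_p : ∀ w, ι (p w) = frameProj J φ z v w

/-- In the paper's notation `z' = J z`, `v' = J v`; `g₀` gets the projected bracket, and
`D`, `F`, `s₀` are the projections of `ad v'`, `ad v` and `[v, v']`. -/
def reducedBr (br : V → V → V) (ι : W →ₗ[ℝ] V) (p : V →ₗ[ℝ] W) (ξ η : W) : W :=
  p (br (ι ξ) (ι η))

def reducedJ (J : V → V) (ι : W →ₗ[ℝ] V) (p : V →ₗ[ℝ] W) (ξ : W) : W := p (J (ι ξ))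

def reducedPhi (φ : V → V → ℝ) (ι : W →ₗ[ℝ] V) (ξ η : W) : ℝ := φ (ι ξ) (ι η)

def reducedD (br : V → V → V) (J : V → V) (v : V) (ι : W →ₗ[ℝ] V) (p : V →ₗ[ℝ] W)
    (ξ : W) : W :=
  p (br (J v) (ι ξ))

def reducedF (br : V → V → V) (v : V) (ι : W →ₗ[ℝ] V) (p : V →ₗ[ℝ] W) (ξ : W) : W :=
  p (br v (ι ξ))

def reducedS (br : V → V → V) (J : V → V) (v : V) (p : V →ₗ[ℝ] W) : W := p (br v (J v))

end Frame

namespace IsExtensionFrame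

variable {V : Type*} [AddCommGroup V] [Module ℝ V] {br : V → V → V} {J : V → V}
  {φ : V → V → ℝ} {z v : V} (h : IsPHQ V br J φ) (hf : IsExtensionFrame br J φ z v)
include h hf

theorem phi_v_z : φ v z = 1 := by rw [h.phi_symm, hf.phi_z_v]

theorem phi_z_Jv : φ z (J v) = 0 := by linarith [h.phi_J_left z v, hf.phi_Jz_v]

theorem phi_v_Jz : φ v (J z) = 0 := by rw [h.phi_symm, hf.phi_Jz_v]

theorem br_z_right (x : V) : br x z = 0 := by rw [h.br_skew, hf.central, neg_zero]

theorem br_Jz_right (x : V) : br x (J z) = 0 := by rw [h.br_skew, hf.J_central, neg_zero]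

theorem phi_br_z (x y : V) : φ (br x y) z = 0 := by
  rw [h.phi_br_left, hf.br_z_right h, h.phi_zero_right, neg_zero]

theorem phi_br_Jz (x y : V) : φ (br x y) (J z) = 0 := by
  rw [h.phi_br_left, hf.br_Jz_right h, h.phi_zero_right, neg_zero]

theorem frameProj_z : frameProj J φ z v z = 0 := by
  simp [frameProj, hf.phi_z_v, hf.phi_z_Jv h, hf.phi_z_z, h.phi_self_J]

theorem frameProj_Jz : frameProj J φ z v (J z) = 0 := by
  simp [frameProj, h.phi_J_left, h.J_sq, h.phi_neg_right, hf.phi_z_v, hf.phi_z_z,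
    h.phi_self_J, hf.phi_z_Jv h]

theorem frameProj_v : frameProj J φ z v v = 0 := by
  simp [frameProj, hf.phi_v_v, h.phi_self_J, hf.phi_v_z h, hf.phi_v_Jz h]

theorem frameProj_Jv : frameProj J φ z v (J v) = 0 := by
  simp [frameProj, h.phi_J_left, h.J_sq, h.phi_neg_right, hf.phi_v_v, hf.phi_v_z h,
    h.phi_self_J, hf.phi_v_Jz h]

theorem br_eq_zero_of_mem_span {w : V} (hw : w ∈ Submodule.span ℝ {z, J z}) (x : V) :
    br w x = 0 := by
  obtain ⟨a, b, rfl⟩ := Submodule.mem_span_pair.1 hw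
  rw [h.br_add_left, h.br_smul_left, h.br_smul_left, hf.central, hf.J_central, smul_zero,
    smul_zero, add_zero]

theorem phi_frameProj_z (w : V) : φ (frameProj J φ z v w) z = 0 := by
  simp only [frameProj, h.phi_sub_left, h.phi_smul_left, h.phi_J_left, h.phi_self_J,
    hf.phi_z_z, hf.phi_v_z h, hf.phi_v_Jz h]
  ring

theorem phi_frameProj_Jz (w : V) : φ (frameProj J φ z v w) (J z) = 0 := by
  simp only [frameProj, h.phi_sub_left, h.phi_smul_left, h.phi_J_left, h.J_sq,
    h.phi_neg_right, h.phi_self_J, hf.phi_z_z, hf.phi_v_z h, hf.phi_v_Jz h]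
  ring

theorem phi_frameProj_v (w : V) : φ (frameProj J φ z v w) v = 0 := by
  simp only [frameProj, h.phi_sub_left, h.phi_smul_left, h.phi_J_left, h.phi_self_J,
    hf.phi_z_v, hf.phi_v_v, hf.phi_z_Jv h]
  ring

theorem phi_frameProj_Jv (w : V) : φ (frameProj J φ z v w) (J v) = 0 := by
  simp only [frameProj, h.phi_sub_left, h.phi_smul_left, h.phi_J_left, h.J_sq,
    h.phi_neg_right, h.phi_self_J, hf.phi_z_v, hf.phi_v_v, hf.phi_z_Jv h]
  ring

theorem exists_splitting [FiniteDimensional ℝ V] {n : ℕ} (hn : Module.finrank ℝ V = n) :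
    ∃ (ι : (Fin (n - 4) → ℝ) →ₗ[ℝ] V) (p : V →ₗ[ℝ] (Fin (n - 4) → ℝ)),
      IsFrameSplitting J φ z v ι p := by
  let L : V →ₗ[ℝ] (Fin 4 → ℝ) := LinearMap.pi ![h.form z, h.form (J z), h.form v, h.form (J v)]
  have hL (w : V) : L w = ![φ z w, φ (J z) w, φ v w, φ (J v) w] := by
    ext i; fin_cases i <;> rfl
  have hLsurj : LinearMap.range L = ⊤ := by
    refine LinearMap.range_eq_top.2 fun y => ⟨y 0 • v + y 1 • J v + y 2 • z + y 3 • J z, ?_⟩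
    rw [hL]
    ext i
    fin_cases i <;> simp [h.phi_add_right, h.phi_smul_right, h.phi_J_left, h.J_sq,
      h.phi_neg_right, h.phi_self_J, hf.phi_z_z, hf.phi_z_v, hf.phi_z_Jv h, hf.phi_v_z h,
      hf.phi_v_v, hf.phi_v_Jz h]
  have hrank : Module.finrank ℝ (LinearMap.ker L) = Module.finrank ℝ (Fin (n - 4) → ℝ) := by
    have := LinearMap.finrank_range_add_finrank_ker L
    rw [hLsurj, finrank_top, Module.finrank_fin_fun] at this
    rw [Module.finrank_fin_fun]
    omega
  let e := LinearEquiv.ofFinrankEq _ _ hrank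
  let π : V →ₗ[ℝ] V :=
    { toFun := frameProj J φ z v
      map_add' x y := by
        simp only [frameProj, h.phi_add_left, add_smul]
        abel
      map_smul' c x := by
        simp only [frameProj, h.phi_smul_left, mul_smul, smul_sub, RingHom.id_apply] }
  have hπL (w : V) : π w ∈ LinearMap.ker L := by
    rw [LinearMap.mem_ker, hL]
    simp only [h.phi_symm _ (π w)]
    simp [π, hf.phi_frameProj_z h, hf.phi_frameProj_Jz h, hf.phi_frameProj_v h,
      hf.phi_frameProj_Jv h]
  refine ⟨(LinearMap.ker L).subtype ∘ₗ e.symm.toLinearMap,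
    e.toLinearMap ∘ₗ π.codRestrict (LinearMap.ker L) hπL, fun ξ => ?_, fun w => ?_⟩
  · have hfix : π (e.symm ξ) = e.symm ξ := by
      have hξ := LinearMap.mem_ker.1 (e.symm ξ).2
      rw [hL] at hξ
      exact frameProj_eq_self (by rw [h.phi_symm]; exact congrFun hξ 0)
        (by rw [h.phi_symm]; exact congrFun hξ 1) (by rw [h.phi_symm]; exact congrFun hξ 2)
        (by rw [h.phi_symm]; exact congrFun hξ 3)
    have hcod : π.codRestrict (LinearMap.ker L) hπL (e.symm ξ) = e.symm ξ := Subtype.ext hfix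
    simp [hcod]
  · simp [π]

end IsExtensionFrame

namespace IsFrameSplitting

variable {V W : Type*} [AddCommGroup V] [Module ℝ V] [AddCommGroup W] [Module ℝ W]
  {br : V → V → V} {J : V → V} {φ : V → V → ℝ} {z v : V} {ι : W →ₗ[ℝ] V} {p : V →ₗ[ℝ] W}

section
variable (hs : IsFrameSplitting J φ z v ι p)
include hs

theorem ι_eq_frameProj (ξ : W) : ι ξ = frameProj J φ z v (ι ξ) := by rw [← hs.ι_p, hs.p_ι]

theorem p_frameProj (w : V) : p (frameProj J φ z v w) = p w := by rw [← hs.ι_p, hs.p_ι]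

theorem eq_ι_p_add (w : V) :
    w = ι (p w) + φ w v • z + φ w (J v) • J z + φ w z • v + φ w (J z) • J v := by
  rw [hs.ι_p, frameProj]
  abel

end

section
variable (h : IsPHQ V br J φ) (hs : IsFrameSplitting J φ z v ι p)
include h hs

theorem ι_reducedJ (ξ : W) : ι (reducedJ J ι p ξ) = J (ι ξ) := by
  rw [reducedJ, hs.ι_p, h.frameProj_J, ← hs.ι_eq_frameProj]

theorem p_J (w : V) : p (J w) = reducedJ J ι p (p w) := by
  rw [reducedJ, hs.ι_p, ← h.frameProj_J, hs.p_frameProj]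

end

variable (h : IsPHQ V br J φ) (hf : IsExtensionFrame br J φ z v)
  (hs : IsFrameSplitting J φ z v ι p)
include h hf hs

theorem phi_ι_z (ξ : W) : φ (ι ξ) z = 0 := by
  rw [hs.ι_eq_frameProj]; exact hf.phi_frameProj_z h _

theorem phi_ι_Jz (ξ : W) : φ (ι ξ) (J z) = 0 := by
  rw [hs.ι_eq_frameProj]; exact hf.phi_frameProj_Jz h _

theorem phi_ι_v (ξ : W) : φ (ι ξ) v = 0 := by
  rw [hs.ι_eq_frameProj]; exact hf.phi_frameProj_v h _

theorem phi_ι_Jv (ξ : W) : φ (ι ξ) (J v) = 0 := by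
  rw [hs.ι_eq_frameProj]; exact hf.phi_frameProj_Jv h _

theorem phi_z_ι (ξ : W) : φ z (ι ξ) = 0 := by rw [h.phi_symm, hs.phi_ι_z h hf]

theorem phi_v_ι (ξ : W) : φ v (ι ξ) = 0 := by rw [h.phi_symm, hs.phi_ι_v h hf]

theorem p_z : p z = 0 := by rw [← hs.p_frameProj, hf.frameProj_z h, map_zero]

theorem p_Jz : p (J z) = 0 := by rw [← hs.p_frameProj, hf.frameProj_Jz h, map_zero]

theorem p_v : p v = 0 := by rw [← hs.p_frameProj, hf.frameProj_v h, map_zero]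

theorem p_Jv : p (J v) = 0 := by rw [← hs.p_frameProj, hf.frameProj_Jv h, map_zero]

theorem phi_ι_ι_p (ξ : W) (w : V) : φ (ι ξ) (ι (p w)) = φ (ι ξ) w := by
  rw [hs.ι_p]
  simp only [frameProj, h.phi_sub_right, h.phi_smul_right, hs.phi_ι_z h hf, hs.phi_ι_Jz h hf,
    hs.phi_ι_v h hf, hs.phi_ι_Jv h hf]
  ring

theorem phi_ι_p_ι (w : V) (ξ : W) : φ (ι (p w)) (ι ξ) = φ w (ι ξ) := by
  rw [h.phi_symm, hs.phi_ι_ι_p h hf, h.phi_symm]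

theorem br_ι_p_left {w : V} (hz : φ w z = 0) (hJz : φ w (J z) = 0) (x : V) :
    br (ι (p w)) x = br w x := by
  simp [hs.ι_p, frameProj, hz, hJz, h.br_sub_left, h.br_smul_left, hf.central, hf.J_central]

theorem br_ι_p_br_left (a b x : V) : br (ι (p (br a b))) x = br (br a b) x :=
  hs.br_ι_p_left h hf (hf.phi_br_z h a b) (hf.phi_br_Jz h a b) x

theorem br_ι_p_br_right (a b x : V) : br x (ι (p (br a b))) = br x (br a b) := by
  rw [h.br_skew, hs.br_ι_p_br_left h hf, ← h.br_skew]

theorem br_eq_ι_p_add (a b : V) :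
    br a b = ι (p (br a b)) + φ (br a b) v • z + φ (br a b) (J v) • J z := by
  rw [hs.ι_p, frameProj, hf.phi_br_z h, hf.phi_br_Jz h]
  module

theorem br_v_Jv : br v (J v) = ι (reducedS br J v p) := by
  have hv : φ (br v (J v)) v = 0 := by
    rw [h.phi_br_left, h.br_self, h.phi_zero_right, neg_zero]
  have hJv : φ (br v (J v)) (J v) = 0 := by
    linarith [h.phi_br_left v (J v) (J v), h.phi_symm (J v) (br v (J v))]
  rw [reducedS]
  simpa [hv, hJv] using hs.br_eq_ι_p_add h hf v (J v)

theorem br_v_ι (ξ : W) : br v (ι ξ) =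
    ι (reducedF br v ι p ξ) - reducedPhi φ ι (reducedS br J v p) ξ • J z := by
  have hv : φ (br v (ι ξ)) v = 0 := by
    rw [h.phi_br_left, h.br_self, h.phi_zero_right, neg_zero]
  have hJv : φ (br v (ι ξ)) (J v) = -reducedPhi φ ι (reducedS br J v p) ξ := by
    rw [h.phi_br_left, hs.br_v_Jv h hf, reducedPhi, h.phi_symm]
  rw [reducedF]
  have := hs.br_eq_ι_p_add h hf v (ι ξ)
  rw [hv, hJv] at this
  conv_lhs => rw [this]
  module

theorem br_Jv_ι (ξ : W) : br (J v) (ι ξ) =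
    ι (reducedD br J v ι p ξ) + reducedPhi φ ι (reducedS br J v p) ξ • z := by
  have hv : φ (br (J v) (ι ξ)) v = reducedPhi φ ι (reducedS br J v p) ξ := by
    rw [h.phi_br_left, h.br_skew, hs.br_v_Jv h hf, h.phi_neg_right, neg_neg, reducedPhi,
      h.phi_symm]
  have hJv : φ (br (J v) (ι ξ)) (J v) = 0 := by
    rw [h.phi_br_left, h.br_self, h.phi_zero_right, neg_zero]
  rw [reducedD]
  have := hs.br_eq_ι_p_add h hf (J v) (ι ξ)
  rw [hv, hJv] at this
  conv_lhs => rw [this]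
  module

theorem br_ι_ι (ξ η : W) : br (ι ξ) (ι η) = ι (reducedBr br ι p ξ η)
    + reducedPhi φ ι (reducedF br v ι p ξ) η • z
    + reducedPhi φ ι (reducedD br J v ι p ξ) η • J z := by
  have hv : φ (br (ι ξ) (ι η)) v = reducedPhi φ ι (reducedF br v ι p ξ) η := by
    rw [h.phi_br_left, h.br_skew, hs.br_v_ι h hf, h.phi_neg_right, neg_neg, h.phi_sub_right,
      h.phi_smul_right, hs.phi_ι_Jz h hf, mul_zero, sub_zero]
    exact h.phi_symm _ _
  have hJv : φ (br (ι ξ) (ι η)) (J v) = reducedPhi φ ι (reducedD br J v ι p ξ) η := by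
    rw [h.phi_br_left, h.br_skew, hs.br_Jv_ι h hf, h.phi_neg_right, neg_neg, h.phi_add_right,
      h.phi_smul_right, hs.phi_ι_z h hf, mul_zero, add_zero]
    exact h.phi_symm _ _
  rw [reducedBr, ← hv, ← hJv]
  exact hs.br_eq_ι_p_add h hf _ _

theorem reducedBr_reducedBr (ξ η ζ : W) :
    reducedBr br ι p ξ (reducedBr br ι p η ζ) = p (br (ι ξ) (br (ι η) (ι ζ))) := by
  rw [reducedBr, reducedBr, hs.br_ι_p_br_right h hf]

theorem isPHQ_reduced : IsPHQ W (reducedBr br ι p) (reducedJ J ι p) (reducedPhi φ ι) where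
  br_add_left ξ η ζ := by simp only [reducedBr, map_add, h.br_add_left]
  br_smul_left c ξ η := by simp only [reducedBr, map_smul, h.br_smul_left]
  br_skew ξ η := by rw [reducedBr, reducedBr, h.br_skew, map_neg]
  jacobi ξ η ζ := by
    rw [hs.reducedBr_reducedBr h hf, hs.reducedBr_reducedBr h hf, hs.reducedBr_reducedBr h hf,
      ← map_add, ← map_add, h.jacobi, map_zero]
  J_add ξ η := by simp only [reducedJ, map_add, h.J_add]
  J_smul c ξ := by simp only [reducedJ, map_smul, h.J_smul]
  J_sq ξ := by rw [reducedJ, hs.ι_reducedJ h, h.J_sq, map_neg, hs.p_ι]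
  integrable ξ η := by
    simp only [reducedBr, hs.ι_reducedJ h, ← hs.p_J h]
    rw [← map_add, ← map_add, ← map_sub, h.integrable, map_zero]
  phi_add_left ξ η ζ := by simp only [reducedPhi, map_add, h.phi_add_left]
  phi_smul_left c ξ η := by simp only [reducedPhi, map_smul, h.phi_smul_left]
  phi_symm ξ η := h.phi_symm _ _
  phi_nondeg ξ hξ := by
    have hι : ι ξ = 0 := h.phi_nondeg _ fun w => by
      rw [← hs.phi_ι_ι_p h hf]; exact hξ (p w)
    rw [← hs.p_ι ξ, hι, map_zero]
  phi_invariant ξ η ζ := by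
    rw [reducedPhi, reducedPhi, reducedBr, reducedBr, hs.phi_ι_p_ι h hf, hs.phi_ι_ι_p h hf]
    exact h.phi_invariant _ _ _
  phi_hermitian ξ η := by
    rw [reducedPhi, reducedPhi, hs.ι_reducedJ h, hs.ι_reducedJ h, h.phi_hermitian]

theorem reducedPhi_p_br (a : V) (ξ η : W) :
    reducedPhi φ ι (p (br a (ι ξ))) η = -reducedPhi φ ι ξ (p (br a (ι η))) := by
  rw [reducedPhi, reducedPhi, hs.phi_ι_p_ι h hf, hs.phi_ι_ι_p h hf, h.phi_br_left]

theorem p_br_reducedBr (a : V) (ξ η : W) :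
    p (br a (ι (reducedBr br ι p ξ η))) = reducedBr br ι p (p (br a (ι ξ))) η
      + reducedBr br ι p ξ (p (br a (ι η))) := by
  rw [reducedBr, reducedBr, reducedBr, hs.br_ι_p_br_right h hf, hs.br_ι_p_br_left h hf,
    hs.br_ι_p_br_right h hf, h.br_br, map_add]

theorem isPHQDblExtData_reduced :
    IsPHQDblExtData W (reducedBr br ι p) (reducedJ J ι p) (reducedPhi φ ι)
      (reducedD br J v ι p) (reducedF br v ι p) (reducedS br J v p) := by
  refine ⟨fun ξ η => ?_, fun c ξ => ?_, fun ξ η => ?_, fun c ξ => ?_,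
    hs.reducedPhi_p_br h hf (J v), hs.reducedPhi_p_br h hf v,
    hs.p_br_reducedBr h hf (J v), hs.p_br_reducedBr h hf v, fun ξ => ?_, fun ξ => ?_⟩
  · simp only [reducedD, map_add, h.br_add_right]
  · simp only [reducedD, map_smul, h.br_smul_right]
  · simp only [reducedF, map_add, h.br_add_right]
  · simp only [reducedF, map_smul, h.br_smul_right]
  · simp only [reducedF, reducedD, hs.ι_reducedJ h, ← hs.p_J h, h.J_sq, map_neg]
    rw [← map_add, h.integrable_J, map_sub, sub_eq_add_neg]
  · rw [reducedF, reducedD, reducedD, reducedF, hs.br_ι_p_br_right h hf,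
      hs.br_ι_p_br_right h hf, ← map_sub, reducedBr, ← hs.br_v_Jv h hf, h.br_br v (J v),
      add_sub_cancel_right]

theorem lcsW_reduced_le (k : ℕ) :
    lcsW (reducedBr br ι p) ⊤ k ≤ (lcsW br ⊤ k ⊔ Submodule.span ℝ {z, J z}).comap ι := by
  induction k with
  | zero => exact fun ξ _ => Submodule.mem_sup_left Submodule.mem_top
  | succ k ih =>
    rw [lcsW_succ, Submodule.span_le]
    rintro _ ⟨η, hη, ζ, -, rfl⟩
    obtain ⟨c, hc, w, hw, hcw⟩ := Submodule.mem_sup.1 (ih hη)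
    have hbr : br (ι η) (ι ζ) = br c (ι ζ) := by
      rw [← hcw, h.br_add_left, hf.br_eq_zero_of_mem_span h hw, add_zero]
    have hι : ι (reducedBr br ι p η ζ) = br c (ι ζ)
        - (reducedPhi φ ι (reducedF br v ι p η) ζ • z
          + reducedPhi φ ι (reducedD br J v ι p η) ζ • J z) := by
      rw [← hbr, hs.br_ι_ι h hf]
      abel
    rw [SetLike.mem_coe, Submodule.mem_comap, hι]
    exact sub_mem (Submodule.mem_sup_left (br_mem_lcsW_succ hc Submodule.mem_top))
      (Submodule.mem_sup_right (add_mem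
        (Submodule.smul_mem _ _ (Submodule.subset_span (by simp)))
        (Submodule.smul_mem _ _ (Submodule.subset_span (by simp)))))

theorem lcsW_reduced_eq_bot {k : ℕ} (hk : lcsW br ⊤ k = ⊥) :
    lcsW (reducedBr br ι p) ⊤ k = ⊥ := by
  rw [Submodule.eq_bot_iff]
  intro ξ hξ
  have hmem := hs.lcsW_reduced_le h hf k hξ
  rw [hk, bot_sup_eq, Submodule.mem_comap] at hmem
  obtain ⟨a, b, hab⟩ := Submodule.mem_span_pair.1 hmem
  rw [← hs.p_ι ξ, ← hab, map_add, map_smul, map_smul, hs.p_z h hf, hs.p_Jz h hf, smul_zero,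
    smul_zero, add_zero]

def extEquiv : (ℝ × ℝ × W × ℝ × ℝ) ≃ₗ[ℝ] V where
  toFun P := P.1 • z + P.2.1 • J z + ι P.2.2.1 + P.2.2.2.1 • J v + P.2.2.2.2 • v
  map_add' P Q := by
    simp only [Prod.fst_add, Prod.snd_add, add_smul, map_add]
    abel
  map_smul' c P := by
    simp only [Prod.smul_fst, Prod.smul_snd, smul_eq_mul, mul_smul, map_smul,
      RingHom.id_apply, smul_add]
  invFun w := (φ w v, φ w (J v), p w, φ w (J z), φ w z)
  left_inv P := by
    obtain ⟨a, b, ξ, c, d⟩ := P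
    simp only [h.phi_add_left, h.phi_smul_left, h.phi_J_left, h.J_sq, h.phi_neg_right,
      h.phi_self_J, hf.phi_z_z, hf.phi_z_v, hf.phi_z_Jv h, hf.phi_v_z h, hf.phi_v_v,
      hf.phi_v_Jz h, hs.phi_ι_z h hf, hs.phi_ι_Jz h hf, hs.phi_ι_v h hf, hs.phi_ι_Jv h hf,
      map_add, map_smul, hs.p_z h hf, hs.p_Jz h hf, hs.p_v h hf, hs.p_Jv h hf, hs.p_ι]
    simp
  right_inv w := by
    dsimp only
    conv_rhs => rw [hs.eq_ι_p_add w]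
    abel

theorem extEquiv_apply (P : ℝ × ℝ × W × ℝ × ℝ) : hs.extEquiv h hf P =
    P.1 • z + P.2.1 • J z + ι P.2.2.1 + P.2.2.2.1 • J v + P.2.2.2.2 • v := rfl

theorem extEquiv_extJ (P : ℝ × ℝ × W × ℝ × ℝ) :
    hs.extEquiv h hf (extJ (reducedJ J ι p) P) = J (hs.extEquiv h hf P) := by
  simp only [extEquiv_apply, extJ, h.J_add, h.J_smul, h.J_sq, hs.ι_reducedJ h]
  module

theorem phi_extEquiv (P Q : ℝ × ℝ × W × ℝ × ℝ) :
    φ (hs.extEquiv h hf P) (hs.extEquiv h hf Q) = extPhi (reducedPhi φ ι) P Q := by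
  simp only [extEquiv_apply, extPhi, reducedPhi, h.phi_add_left, h.phi_add_right,
    h.phi_smul_left, h.phi_smul_right, h.phi_J_left, h.J_sq, h.phi_neg_right, h.phi_self_J,
    hf.phi_z_z, hf.phi_z_v, hf.phi_z_Jv h, hf.phi_v_z h, hf.phi_v_v, hf.phi_v_Jz h,
    hs.phi_ι_z h hf, hs.phi_ι_Jz h hf, hs.phi_ι_v h hf, hs.phi_ι_Jv h hf, hs.phi_z_ι h hf,
    hs.phi_v_ι h hf, ← hs.ι_reducedJ h]
  ring

theorem extEquiv_extBr (P Q : ℝ × ℝ × W × ℝ × ℝ) :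
    hs.extEquiv h hf (extBr (reducedBr br ι p) (reducedPhi φ ι) (reducedD br J v ι p)
      (reducedF br v ι p) (reducedS br J v p) P Q) =
      br (hs.extEquiv h hf P) (hs.extEquiv h hf Q) := by
  have hιJv (ξ : W) : br (ι ξ) (J v) = -br (J v) (ι ξ) := h.br_skew _ _
  have hιv (ξ : W) : br (ι ξ) v = -br v (ι ξ) := h.br_skew _ _
  have hJvv : br (J v) v = -br v (J v) := h.br_skew _ _
  simp only [extEquiv_apply, extBr, h.br_add_left, h.br_add_right, h.br_smul_left,
    h.br_smul_right, hf.central, hf.J_central, hf.br_z_right h, hf.br_Jz_right h, h.br_self,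
    hιJv, hιv, hJvv, hs.br_ι_ι h hf, hs.br_v_ι h hf, hs.br_Jv_ι h hf, hs.br_v_Jv h hf,
    map_add, map_sub, map_smul]
  module

theorem phqEquiv_extension :
    PHQEquiv br J φ (extBr (reducedBr br ι p) (reducedPhi φ ι) (reducedD br J v ι p)
      (reducedF br v ι p) (reducedS br J v p)) (extJ (reducedJ J ι p))
      (extPhi (reducedPhi φ ι)) :=
  phqEquiv_of_linearEquiv (hs.extEquiv h hf) (hs.extEquiv_extBr h hf) (hs.extEquiv_extJ h hf)
    (hs.phi_extEquiv h hf)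

end IsFrameSplitting

theorem stmt_9_general {V : Type*} [AddCommGroup V] [Module ℝ V] [FiniteDimensional ℝ V]
    (br : V → V → V) (J : V → V) (φ : V → V → ℝ) (h : IsPHQ V br J φ)
    (hnilp : ∃ k, lcsW br ⊤ k = ⊥)
    (hna : ∃ x y : V, br x y ≠ 0)
    (n : ℕ) (hn : Module.finrank ℝ V = n) :
    ∃ (br₀ : (Fin (n - 4) → ℝ) → (Fin (n - 4) → ℝ) → (Fin (n - 4) → ℝ))
      (J₀ : (Fin (n - 4) → ℝ) → (Fin (n - 4) → ℝ))
      (φ₀ : (Fin (n - 4) → ℝ) → (Fin (n - 4) → ℝ) → ℝ)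
      (D F : (Fin (n - 4) → ℝ) → (Fin (n - 4) → ℝ)) (s₀ : Fin (n - 4) → ℝ),
      IsPHQ (Fin (n - 4) → ℝ) br₀ J₀ φ₀ ∧
      (∃ k, lcsW br₀ ⊤ k = ⊥) ∧
      IsPHQDblExtData (Fin (n - 4) → ℝ) br₀ J₀ φ₀ D F s₀ ∧
      PHQEquiv br J φ (extBr br₀ φ₀ D F s₀) (extJ J₀) (extPhi φ₀) := by
  obtain ⟨z, hz0, hz, hJz, hzz⟩ := h.exists_isotropic_mem_center hnilp hna
  obtain ⟨v, hzv, hJzv, hvv⟩ := h.exists_isotropic_partner hz0 hzz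
  have hf : IsExtensionFrame br J φ z v := ⟨hz, hJz, hzz, hzv, hJzv, hvv⟩
  obtain ⟨ι, p, hs⟩ := hf.exists_splitting h hn
  obtain ⟨k, hk⟩ := hnilp
  exact ⟨_, _, _, _, _, _, hs.isPHQ_reduced h hf, ⟨k, hs.lcsW_reduced_eq_bot h hf hk⟩,
    hs.isPHQDblExtData_reduced h hf, hs.phqEquiv_extension h hf⟩

/-- a non-abelian nilpotent pseudo-Hermitian quadratic Lie algebra of
dimension `n > 4` is equivalent to a pHQ-double extension of an `(n-4)`-dimensional
nilpotent pseudo-Hermitian quadratic Lie algebra. -/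
theorem stmt_9 {V : Type*} [AddCommGroup V] [Module ℝ V] [FiniteDimensional ℝ V]
    (br : V → V → V) (J : V → V) (φ : V → V → ℝ) (h : IsPHQ V br J φ)
    (hnilp : ∃ k, lcsW br ⊤ k = ⊥)
    (hna : ∃ x y : V, br x y ≠ 0)
    (n : ℕ) (hn : Module.finrank ℝ V = n) (h4 : 4 < n) :
    ∃ (br₀ : (Fin (n - 4) → ℝ) → (Fin (n - 4) → ℝ) → (Fin (n - 4) → ℝ))
      (J₀ : (Fin (n - 4) → ℝ) → (Fin (n - 4) → ℝ))
      (φ₀ : (Fin (n - 4) → ℝ) → (Fin (n - 4) → ℝ) → ℝ)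
      (D F : (Fin (n - 4) → ℝ) → (Fin (n - 4) → ℝ)) (s₀ : Fin (n - 4) → ℝ),
      IsPHQ (Fin (n - 4) → ℝ) br₀ J₀ φ₀ ∧
      (∃ k, lcsW br₀ ⊤ k = ⊥) ∧
      IsPHQDblExtData (Fin (n - 4) → ℝ) br₀ J₀ φ₀ D F s₀ ∧
      PHQEquiv br J φ (extBr br₀ φ₀ D F s₀) (extJ J₀) (extPhi φ₀) :=
  stmt_9_general br J φ h hnilp hna n hn
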